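/- arXiv:0704.0945 — 2 statements merged into one kernel-verified Lean document; each statement's English description precedes it below -/
import Mathlib

section
/- The number of binary fragmentation trees of the set [n] = {1,...,n} equals (2n-2)!/(2^{n-1}(n-1)!), i.e., the double factorial (2n-3)!! for n ≥ 1. -/
/-!
Deleting the leaf `m` from a binary fragmentation of `insert m B` gives one of `B`, from which
the original is recovered by grafting `{m}` back next to its former sibling; and grafting `{m}`
next to any vertex of a fragmentation of `B` gives one of `insert m B`. So the fragmentations of
`insert m B` correspond to pairs of a fragmentation of `B` and one of its vertices. Each graft
adds two vertices, so a fragmentation of `B` has `2 * #B - 1` vertices, and adding a point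
multiplies the count by `2 * #B - 1`. The factorial form follows from `(2k)! = (2k)‼ * (2k - 1)‼`
and `(2k)‼ = 2 ^ k * k!`.
-/

open Finset

/-- `t` is a binary fragmentation (hierarchy) of the finite set `B`:
a laminar family of nonempty subsets of `B` containing `B`, in which every
member with at least two elements splits into exactly two disjoint nonempty
members (its two children), recursively down to singletons. -/
def IsBinFrag (B : Finset ℕ) (t : Finset (Finset ℕ)) : Prop :=
  B ∈ t ∧ (∀ A ∈ t, A.Nonempty ∧ A ⊆ B) ∧
  (∀ C ∈ t, ∀ D ∈ t, C ⊆ D ∨ D ⊆ C ∨ Disjoint C D) ∧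
  (∀ b ∈ B, {b} ∈ t) ∧
  (∀ A ∈ t, 2 ≤ A.card →
    ∃ C ∈ t, ∃ D ∈ t, Disjoint C D ∧ C ∪ D = A ∧ C.Nonempty ∧ D.Nonempty)

-- The (finite) set of all binary fragmentations of `B`.
open scoped Classical in
noncomputable def allBinFrags (B : Finset ℕ) : Finset (Finset (Finset ℕ)) :=
  B.powerset.powerset.filter (fun t => IsBinFrag B t)

/-- `ch` assigns to each internal vertex `A` of the fragmentation `t` its
two children `(ch A).1`, `(ch A).2`. -/
def IsChildFun (t : Finset (Finset ℕ)) (ch : Finset ℕ → Finset ℕ × Finset ℕ) : Prop :=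
  ∀ A ∈ t, 2 ≤ A.card →
    (ch A).1 ∈ t ∧ (ch A).2 ∈ t ∧ Disjoint (ch A).1 (ch A).2 ∧
    (ch A).1 ∪ (ch A).2 = A ∧ (ch A).1.Nonempty ∧ (ch A).2.Nonempty

open scoped Nat

lemma mem_allBinFrags {B : Finset ℕ} {t : Finset (Finset ℕ)} :
    t ∈ allBinFrags B ↔ IsBinFrag B t := by
  classical
  simp only [allBinFrags, mem_filter, mem_powerset, and_iff_right_iff_imp]
  exact fun h A hA => mem_powerset.2 (h.2.1 A hA).2

lemma isBinFrag_singleton_iff {b : ℕ} {t : Finset (Finset ℕ)} :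
    IsBinFrag {b} t ↔ t = {{b}} := by
  constructor
  · rintro ⟨hb, hsub, -⟩
    refine eq_singleton_iff_unique_mem.2 ⟨hb, fun A hA => ?_⟩
    exact (subset_singleton_iff.1 (hsub A hA).2).resolve_left (hsub A hA).1.ne_empty
  · rintro rfl
    refine ⟨mem_singleton_self _, ?_, ?_, ?_, ?_⟩ <;> simp

lemma subset_or_subset_of_subset_union {α : Type*} [DecidableEq α] {A C D : Finset α}
    (hAC : A ⊆ C ∨ C ⊆ A ∨ Disjoint A C) (hAD : A ⊆ D ∨ D ⊆ A ∨ Disjoint A D)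
    (hA : A ⊆ C ∪ D) (hCD : ¬ C ∪ D ⊆ A) : A ⊆ C ∨ A ⊆ D := by
  rcases hAC with hAC | hCA | hAC
  · exact .inl hAC
  · rcases hAD with hAD | hDA | hAD
    · exact .inr hAD
    · exact absurd (union_subset hCA hDA) hCD
    · exact .inl (hAD.left_le_of_le_sup_right hA)
  · exact .inr (hAC.left_le_of_le_sup_left hA)

section IsBinFrag

variable {m : ℕ} {B A : Finset ℕ} {t : Finset (Finset ℕ)}

lemma IsBinFrag.notMem (h : IsBinFrag B t) (hm : m ∉ B) {X : Finset ℕ} (hX : X ∈ t) :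
    m ∉ X :=
  fun hmX => hm ((h.2.1 X hX).2 hmX)

lemma IsBinFrag.exists_split_notMem (h : IsBinFrag B t) (m : ℕ) (hA : A ∈ t) (hA2 : 2 ≤ #A) :
    ∃ C ∈ t, ∃ D ∈ t, Disjoint C D ∧ C ∪ D = A ∧ C.Nonempty ∧ D.Nonempty ∧ m ∉ C := by
  obtain ⟨C, hC, D, hD, hCD, rfl, hCne, hDne⟩ := h.2.2.2.2 A hA hA2
  by_cases hmC : m ∈ C
  · exact ⟨D, hD, C, hC, hCD.symm, union_comm D C, hDne, hCne, disjoint_left.1 hCD hmC⟩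
  · exact ⟨C, hC, D, hD, hCD, rfl, hCne, hDne, hmC⟩

end IsBinFrag

def insertAbove (m : ℕ) (A X : Finset ℕ) : Finset ℕ :=
  if A ⊆ X then insert m X else X

/-- Grafts the new leaf `{m}` as the sibling of the vertex `A`: `A` gets the new parent
`insert m A`, and `m` is added to every ancestor of `A`. -/
def graftLeaf (m : ℕ) (t : Finset (Finset ℕ)) (A : Finset ℕ) : Finset (Finset ℕ) :=
  insert A (insert {m} (t.image (insertAbove m A)))

/-- The leaf `{m}` becomes `∅` and is discarded, while its parent becomes equal to its sibling,
so the two collapse into one vertex. -/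
def eraseLeaf (m : ℕ) (t : Finset (Finset ℕ)) : Finset (Finset ℕ) :=
  (t.image (·.erase m)).erase ∅

section insertAbove

variable {m : ℕ} {A X Y : Finset ℕ}

lemma insertAbove_of_subset (h : A ⊆ X) : insertAbove m A X = insert m X := if_pos h

lemma insertAbove_of_not_subset (h : ¬ A ⊆ X) : insertAbove m A X = X := if_neg h

lemma subset_insertAbove : X ⊆ insertAbove m A X := by
  unfold insertAbove; split_ifs <;> simp

lemma insertAbove_mono : Monotone (insertAbove m A) := by
  intro X Y hXY
  by_cases hX : A ⊆ X
  · rw [insertAbove_of_subset hX, insertAbove_of_subset (hX.trans hXY)]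
    exact insert_subset_insert m hXY
  · rw [insertAbove_of_not_subset hX]
    exact hXY.trans subset_insertAbove

lemma erase_insertAbove (hm : m ∉ X) : (insertAbove m A X).erase m = X := by
  unfold insertAbove; split_ifs
  · exact erase_insert hm
  · exact erase_eq_of_notMem hm

lemma disjoint_insertAbove (hA : A.Nonempty) (hX : m ∉ X) (hY : m ∉ Y) (h : Disjoint X Y) :
    Disjoint (insertAbove m A X) (insertAbove m A Y) := by
  by_cases hAX : A ⊆ X
  · obtain ⟨a, ha⟩ := hA
    have hAY : ¬ A ⊆ Y := fun hAY => disjoint_left.1 h (hAX ha) (hAY ha)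
    rw [insertAbove_of_subset hAX, insertAbove_of_not_subset hAY]
    exact disjoint_insert_left.2 ⟨hY, h⟩
  · rw [insertAbove_of_not_subset hAX]
    by_cases hAY : A ⊆ Y
    · rw [insertAbove_of_subset hAY]
      exact disjoint_insert_right.2 ⟨hX, h⟩
    · rwa [insertAbove_of_not_subset hAY]

lemma insertAbove_union (h : A ⊆ X ∪ Y → A ⊆ X ∨ A ⊆ Y) :
    insertAbove m A (X ∪ Y) = insertAbove m A X ∪ insertAbove m A Y := by
  by_cases hXY : A ⊆ X ∪ Y
  · have hA' := h hXY
    unfold insertAbove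
    by_cases hX : A ⊆ X <;> by_cases hY : A ⊆ Y <;> simp_all [insert_union, union_insert]
  · have hX : ¬ A ⊆ X := fun hX => hXY (hX.trans subset_union_left)
    have hY : ¬ A ⊆ Y := fun hY => hXY (hY.trans subset_union_right)
    rw [insertAbove_of_not_subset hXY, insertAbove_of_not_subset hX,
      insertAbove_of_not_subset hY]

end insertAbove

section graftLeaf

variable {m : ℕ} {B A : Finset ℕ} {t : Finset (Finset ℕ)}

lemma mem_graftLeaf {X : Finset ℕ} :
    X ∈ graftLeaf m t A ↔ X = A ∨ X = {m} ∨ ∃ Y ∈ t, insertAbove m A Y = X := by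
  simp only [graftLeaf, mem_insert, mem_image]

lemma mem_eraseLeaf {X : Finset ℕ} : X ∈ eraseLeaf m t ↔ X ≠ ∅ ∧ ∃ Y ∈ t, Y.erase m = X := by
  simp only [eraseLeaf, mem_erase, mem_image]

lemma graftLeaf_laminar (h : IsBinFrag B t) (hm : m ∉ B) (hA : A ∈ t) :
    ∀ X ∈ graftLeaf m t A, ∀ Y ∈ graftLeaf m t A, X ⊆ Y ∨ Y ⊆ X ∨ Disjoint X Y := by
  have hmt {X} (hX : X ∈ t) : m ∉ X := h.notMem hm hX
  have hAne : A.Nonempty := (h.2.1 A hA).1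
  have hlam := h.2.2.1
  have hlam_image : ∀ X ∈ graftLeaf m t A, ∀ Y ∈ t,
      X ⊆ insertAbove m A Y ∨ insertAbove m A Y ⊆ X ∨ Disjoint X (insertAbove m A Y) := by
    intro X hX Y hY
    by_cases hAY : A ⊆ Y
    · rcases mem_graftLeaf.1 hX with rfl | rfl | ⟨Y', hY', rfl⟩
      · exact .inl (hAY.trans subset_insertAbove)
      · simp [insertAbove_of_subset hAY]
      · rcases hlam Y' hY' Y hY with h' | h' | h'
        · exact .inl (insertAbove_mono h')
        · exact .inr (.inl (insertAbove_mono h'))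
        · exact .inr (.inr (disjoint_insertAbove hAne (hmt hY') (hmt hY) h'))
    · rw [insertAbove_of_not_subset hAY]
      rcases mem_graftLeaf.1 hX with rfl | rfl | ⟨Y', hY', rfl⟩
      · exact hlam _ hA Y hY
      · simp [hmt hY]
      · rcases hlam Y' hY' Y hY with h' | h' | h'
        · exact .inl (insertAbove_of_not_subset hAY ▸ insertAbove_mono h')
        · exact .inr (.inl (h'.trans subset_insertAbove))
        · exact .inr (.inr (insertAbove_of_not_subset hAY ▸
            disjoint_insertAbove hAne (hmt hY') (hmt hY) h'))
  intro X hX X' hX'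
  rcases mem_graftLeaf.1 hX' with rfl | rfl | ⟨Y, hY, rfl⟩
  · rcases mem_graftLeaf.1 hX with rfl | rfl | ⟨Y, hY, rfl⟩
    · simp
    · simp [hmt hA]
    · have := hlam_image X' (mem_graftLeaf.2 (.inl rfl)) Y hY
      tauto
  · rcases mem_graftLeaf.1 hX with rfl | rfl | ⟨Y, hY, rfl⟩
    · simp [hmt hA]
    · simp
    · have := hlam_image _ (mem_graftLeaf.2 (.inr (.inl rfl))) Y hY
      tauto
  · exact hlam_image X hX Y hY

lemma graftLeaf_exists_split (h : IsBinFrag B t) (hm : m ∉ B) (hA : A ∈ t) :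
    ∀ X ∈ graftLeaf m t A, 2 ≤ #X → ∃ C ∈ graftLeaf m t A, ∃ D ∈ graftLeaf m t A,
      Disjoint C D ∧ C ∪ D = X ∧ C.Nonempty ∧ D.Nonempty := by
  have hmt {X} (hX : X ∈ t) : m ∉ X := h.notMem hm hX
  have hAne : A.Nonempty := (h.2.1 A hA).1
  have hlam := h.2.2.1
  have hsplit := h.2.2.2.2
  have himage {Y} (hY : Y ∈ t) : insertAbove m A Y ∈ graftLeaf m t A :=
    mem_graftLeaf.2 (.inr (.inr ⟨Y, hY, rfl⟩))
  intro X hX hX2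
  rcases mem_graftLeaf.1 hX with rfl | rfl | ⟨Y, hY, rfl⟩
  · obtain ⟨C, hC, D, hD, hCD, rfl, hCne, hDne⟩ := hsplit _ hA hX2
    have hmem {E} (hE : E ∈ t) (hE' : ¬ C ∪ D ⊆ E) : E ∈ graftLeaf m t (C ∪ D) := by
      simpa [insertAbove_of_not_subset hE'] using himage hE
    refine ⟨C, hmem hC ?_, D, hmem hD ?_, hCD, rfl, hCne, hDne⟩
    · exact fun h' => hDne.ne_empty (hCD.symm.eq_bot_of_le (subset_union_right.trans h'))
    · exact fun h' => hCne.ne_empty (hCD.eq_bot_of_le (subset_union_left.trans h'))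
  · simp at hX2
  by_cases hYA : Y = A
  · subst hYA
    refine ⟨Y, mem_graftLeaf.2 (.inl rfl), {m}, mem_graftLeaf.2 (.inr (.inl rfl)),
      disjoint_singleton_right.2 (hmt hA), ?_, hAne, singleton_nonempty m⟩
    rw [insertAbove_of_subset subset_rfl, insert_eq, union_comm]
  have hY2 : 2 ≤ #Y := by
    by_cases hAY : A ⊆ Y
    · have := card_lt_card (ssubset_of_subset_of_ne hAY (Ne.symm hYA))
      have := hAne.card_pos
      omega
    · rwa [insertAbove_of_not_subset hAY] at hX2
  obtain ⟨C, hC, D, hD, hCD, rfl, hCne, hDne⟩ := hsplit Y hY hY2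
  refine ⟨_, himage hC, _, himage hD, disjoint_insertAbove hAne (hmt hC) (hmt hD) hCD,
    (insertAbove_union fun hA' => ?_).symm, hCne.mono subset_insertAbove,
    hDne.mono subset_insertAbove⟩
  exact subset_or_subset_of_subset_union (hlam A hA C hC) (hlam A hA D hD) hA'
    fun h' => hYA (h'.antisymm hA')

lemma isBinFrag_graftLeaf (h : IsBinFrag B t) (hm : m ∉ B) (hA : A ∈ t) :
    IsBinFrag (insert m B) (graftLeaf m t A) := by
  have hlam := graftLeaf_laminar h hm hA
  have hsplit := graftLeaf_exists_split h hm hA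
  obtain ⟨hB, hsub, -, hsing, -⟩ := h
  obtain ⟨hAne, hAB⟩ := hsub A hA
  have himage {Y} (hY : Y ∈ t) : insertAbove m A Y ∈ graftLeaf m t A :=
    mem_graftLeaf.2 (.inr (.inr ⟨Y, hY, rfl⟩))
  refine ⟨?_, fun X hX => ?_, hlam, fun b hb => ?_, hsplit⟩
  · simpa [insertAbove_of_subset hAB] using himage hB
  · rcases mem_graftLeaf.1 hX with rfl | rfl | ⟨Y, hY, rfl⟩
    · exact ⟨hAne, hAB.trans (subset_insert m B)⟩
    · simp
    · refine ⟨(hsub Y hY).1.mono subset_insertAbove, ?_⟩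
      simpa [insertAbove_of_subset hAB] using insertAbove_mono (m := m) (A := A) (hsub Y hY).2
  · rcases mem_insert.1 hb with rfl | hb
    · exact mem_graftLeaf.2 (.inr (.inl rfl))
    by_cases hAb : A ⊆ {b}
    · obtain rfl := (subset_singleton_iff.1 hAb).resolve_left hAne.ne_empty
      exact mem_graftLeaf.2 (.inl rfl)
    · simpa [insertAbove_of_not_subset hAb] using himage (hsing b hb)

lemma card_graftLeaf (h : IsBinFrag B t) (hm : m ∉ B) (hA : A ∈ t) :
    #(graftLeaf m t A) = #t + 2 := by
  have hmt {X} (hX : X ∈ t) : m ∉ X := h.notMem hm hX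
  have hinj : Set.InjOn (insertAbove m A) t := fun X hX Y hY hXY => by
    rw [← erase_insertAbove (A := A) (hmt hX), hXY, erase_insertAbove (hmt hY)]
  have hm_notMem : {m} ∉ t.image (insertAbove m A) := fun hmem => by
    obtain ⟨Y, hY, hYm⟩ := mem_image.1 hmem
    have := erase_insertAbove (A := A) (hmt hY)
    rw [hYm, erase_singleton] at this
    exact (h.2.1 Y hY).1.ne_empty this.symm
  have hA_notMem : A ∉ insert {m} (t.image (insertAbove m A)) := fun hmem => by
    rcases mem_insert.1 hmem with hAm | hmem
    · exact hmt hA (hAm ▸ mem_singleton_self m)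
    obtain ⟨Y, hY, hYA⟩ := mem_image.1 hmem
    obtain rfl : Y = A := by
      rw [← erase_insertAbove (A := A) (hmt hY), hYA, erase_eq_of_notMem (hmt hA)]
    rw [insertAbove_of_subset subset_rfl] at hYA
    exact hmt hY (hYA ▸ mem_insert_self m Y)
  rw [graftLeaf, card_insert_of_notMem hA_notMem, card_insert_of_notMem hm_notMem,
    card_image_of_injOn hinj]

lemma eraseLeaf_graftLeaf (h : IsBinFrag B t) (hm : m ∉ B) (hA : A ∈ t) :
    eraseLeaf m (graftLeaf m t A) = t := by
  have hmt {X} (hX : X ∈ t) : m ∉ X := h.notMem hm hX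
  ext X
  simp only [mem_eraseLeaf, mem_graftLeaf]
  constructor
  · rintro ⟨hX, Y, rfl | rfl | ⟨Z, hZ, rfl⟩, rfl⟩
    · rwa [erase_eq_of_notMem (hmt hA)]
    · simp at hX
    · rwa [erase_insertAbove (hmt hZ)]
  · intro hX
    exact ⟨(h.2.1 X hX).1.ne_empty, _, .inr (.inr ⟨X, hX, rfl⟩), erase_insertAbove (hmt hX)⟩

lemma subset_of_insert_mem_graftLeaf (h : IsBinFrag B t) (hm : m ∉ B) (hA : A ∈ t)
    {Y : Finset ℕ} (hY : Y ∈ t) (hmem : insert m Y ∈ graftLeaf m t A) : A ⊆ Y := by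
  have hmt {X} (hX : X ∈ t) : m ∉ X := h.notMem hm hX
  rcases mem_graftLeaf.1 hmem with hYA | hYm | ⟨Z, hZ, hZY⟩
  · exact absurd (hYA ▸ mem_insert_self m Y) (hmt hA)
  · have := congrArg (·.erase m) hYm
    simp only [erase_insert (hmt hY), erase_singleton] at this
    exact absurd this (h.2.1 Y hY).1.ne_empty
  · have hZY' : Z = Y := by
      rw [← erase_insertAbove (A := A) (hmt hZ), hZY, erase_insert (hmt hY)]
    subst hZY'
    by_contra hAZ
    rw [insertAbove_of_not_subset hAZ] at hZY
    exact hmt hZ (hZY ▸ mem_insert_self m Z)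

lemma graftLeaf_injOn (h : IsBinFrag B t) (hm : m ∉ B) : Set.InjOn (graftLeaf m t) t := by
  intro A hA A' hA' hAA'
  have hins {A A'} (hA : A ∈ t) (hA' : A' ∈ t) (hAA' : graftLeaf m t A = graftLeaf m t A') :
      A' ⊆ A := by
    refine subset_of_insert_mem_graftLeaf h hm hA' hA (hAA' ▸ ?_)
    exact mem_graftLeaf.2 (.inr (.inr ⟨A, hA, insertAbove_of_subset subset_rfl⟩))
  exact (hins hA' hA hAA'.symm).antisymm (hins hA hA' hAA')

end graftLeaf

section eraseLeaf

variable {m : ℕ} {B : Finset ℕ} {t : Finset (Finset ℕ)}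

lemma mem_eraseLeaf_of_notMem {X : Finset ℕ} (hX : X ∈ t) (hXne : X.Nonempty) (hmX : m ∉ X) :
    X ∈ eraseLeaf m t :=
  mem_eraseLeaf.2 ⟨hXne.ne_empty, X, hX, erase_eq_of_notMem hmX⟩

lemma isBinFrag_eraseLeaf (h : IsBinFrag (insert m B) t) (hm : m ∉ B) (hB : B.Nonempty) :
    IsBinFrag B (eraseLeaf m t) := by
  have ⟨hB', hsub, hlam, hsing, hsplit⟩ := h
  refine ⟨mem_eraseLeaf.2 ⟨hB.ne_empty, _, hB', erase_insert hm⟩, ?_, ?_, ?_, ?_⟩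
  · intro X hX
    obtain ⟨hX, Y, hY, rfl⟩ := mem_eraseLeaf.1 hX
    refine ⟨nonempty_iff_ne_empty.2 hX, ?_⟩
    simpa [erase_insert hm] using erase_subset_erase m (hsub Y hY).2
  · intro X hX X' hX'
    obtain ⟨-, Y, hY, rfl⟩ := mem_eraseLeaf.1 hX
    obtain ⟨-, Y', hY', rfl⟩ := mem_eraseLeaf.1 hX'
    rcases hlam Y hY Y' hY' with h' | h' | h'
    · exact .inl (erase_subset_erase m h')
    · exact .inr (.inl (erase_subset_erase m h'))
    · exact .inr (.inr (h'.mono (erase_subset m Y) (erase_subset m Y')))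
  · intro b hb
    have hbm : m ∉ ({b} : Finset ℕ) := fun hmb => hm (mem_singleton.1 hmb ▸ hb)
    exact mem_eraseLeaf_of_notMem (hsing b (mem_insert_of_mem hb)) (singleton_nonempty b) hbm
  · have hsplit_of_notMem {Y} (hY : Y ∈ t) (hmY : m ∉ Y) (hY2 : 2 ≤ #Y) :
        ∃ C ∈ eraseLeaf m t, ∃ D ∈ eraseLeaf m t,
          Disjoint C D ∧ C ∪ D = Y ∧ C.Nonempty ∧ D.Nonempty := by
      obtain ⟨C, hC, D, hD, hCD, rfl, hCne, hDne⟩ := hsplit Y hY hY2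
      exact ⟨C, mem_eraseLeaf_of_notMem hC hCne fun h' => hmY (mem_union_left D h'),
        D, mem_eraseLeaf_of_notMem hD hDne fun h' => hmY (mem_union_right C h'),
        hCD, rfl, hCne, hDne⟩
    intro X hX hX2
    obtain ⟨-, Y, hY, rfl⟩ := mem_eraseLeaf.1 hX
    obtain ⟨C, hC, D, hD, hCD, rfl, hCne, hDne, hmC⟩ :=
      h.exists_split_notMem m hY (hX2.trans card_erase_le)
    rw [erase_union_distrib, erase_eq_of_notMem hmC] at hX2 ⊢
    by_cases hDm : D.erase m = ∅
    · rw [hDm, union_empty] at hX2 ⊢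
      exact hsplit_of_notMem hC hmC hX2
    · exact ⟨C, mem_eraseLeaf_of_notMem hC hCne hmC,
        D.erase m, mem_eraseLeaf.2 ⟨hDm, D, hD, rfl⟩,
        hCD.mono_right (erase_subset m D), rfl, hCne, nonempty_iff_ne_empty.2 hDm⟩

lemma IsBinFrag.exists_sibling (h : IsBinFrag (insert m B) t) (hm : m ∉ B) (hB : B.Nonempty) :
    ∃ C ∈ t, m ∉ C ∧ insert m C ∈ t ∧ ∀ X ∈ t, m ∈ X → X ≠ {m} → C ⊆ X := by
  classical
  have ⟨hB', _, hlam, _, _⟩ := h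
  obtain ⟨P, hPS, hPmin⟩ := exists_min_image (t.filter fun X => m ∈ X ∧ X ≠ {m}) card
    ⟨insert m B, mem_filter.2 ⟨hB', mem_insert_self m B, fun h' => hB.ne_empty <| by
      simpa [erase_insert hm] using congrArg (·.erase m) h'⟩⟩
  obtain ⟨hP, hmP, hPm⟩ := mem_filter.1 hPS
  have hP_subset : ∀ X ∈ t, m ∈ X → X ≠ {m} → P ⊆ X := by
    intro X hX hmX hXm
    rcases hlam P hP X hX with h' | h' | h'
    · exact h'
    · exact (eq_of_subset_of_card_le h' (hPmin X (mem_filter.2 ⟨hX, hmX, hXm⟩))).ge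
    · exact absurd hmX (disjoint_left.1 h' hmP)
  have hP2 : 2 ≤ #P := one_lt_card_iff_nontrivial.2 ((nontrivial_iff_ne_singleton hmP).2 hPm)
  obtain ⟨C, hC, D, hD, hCD, rfl, hCne, hDne, hmC⟩ := h.exists_split_notMem m hP hP2
  have hmD : m ∈ D := (mem_union.1 hmP).resolve_left hmC
  have hDm : D = {m} := by
    by_contra hDm
    obtain ⟨c, hc⟩ := hCne
    exact disjoint_left.1 hCD hc (hP_subset D hD hmD hDm (mem_union_left D hc))
  subst hDm
  refine ⟨C, hC, hmC, by rwa [insert_eq, union_comm], fun X hX hmX hXm => ?_⟩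
  exact subset_union_left.trans (hP_subset X hX hmX hXm)

lemma eq_graftLeaf_eraseLeaf (h : IsBinFrag (insert m B) t) {C : Finset ℕ} (hC : C ∈ t)
    (hmC : m ∉ C) (hP : insert m C ∈ t) (hmin : ∀ X ∈ t, m ∈ X → X ≠ {m} → C ⊆ X) :
    t = graftLeaf m (eraseLeaf m t) C := by
  obtain ⟨-, hsub, hlam, hsing, -⟩ := h
  have hC_above {X} (hX : X ∈ t) (hmX : m ∉ X) (hCX : C ⊆ X) : X = C := by
    rcases hlam X hX _ hP with h' | h' | h'
    · exact (subset_insert_iff_of_notMem hmX).1 h' |>.antisymm hCX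
    · exact absurd (h' (mem_insert_self m C)) hmX
    · obtain ⟨c, hc⟩ := (hsub C hC).1
      exact absurd (mem_insert_of_mem hc) (disjoint_left.1 h' (hCX hc))
  have hinsertAbove {X} (hX : X ∈ t) (hXC : X ≠ C) (hXm : X ≠ {m}) :
      insertAbove m C (X.erase m) = X := by
    by_cases hmX : m ∈ X
    · rw [insertAbove_of_subset (subset_erase.2 ⟨hmin X hX hmX hXm, hmC⟩), insert_erase hmX]
    · rw [erase_eq_of_notMem hmX, insertAbove_of_not_subset fun hCX => hXC (hC_above hX hmX hCX)]
  ext X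
  simp only [mem_graftLeaf, mem_eraseLeaf]
  constructor
  · intro hX
    by_cases hXC : X = C
    · exact .inl hXC
    by_cases hXm : X = {m}
    · exact .inr (.inl hXm)
    refine .inr (.inr ⟨X.erase m, ⟨?_, X, hX, rfl⟩, hinsertAbove hX hXC hXm⟩)
    rw [Ne, erase_eq_empty_iff, not_or]
    exact ⟨(hsub X hX).1.ne_empty, hXm⟩
  · rintro (rfl | rfl | ⟨_, ⟨hY, Z, hZ, rfl⟩, rfl⟩)
    · exact hC
    · exact hsing m (mem_insert_self m B)
    by_cases hZC : Z = C
    · subst hZC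
      rwa [erase_eq_of_notMem hmC, insertAbove_of_subset subset_rfl]
    by_cases hZm : Z = {m}
    · simp [hZm] at hY
    rwa [hinsertAbove hZ hZC hZm]

lemma IsBinFrag.exists_eq_graftLeaf (h : IsBinFrag (insert m B) t) (hm : m ∉ B)
    (hB : B.Nonempty) : ∃ A ∈ eraseLeaf m t, t = graftLeaf m (eraseLeaf m t) A := by
  obtain ⟨C, hC, hmC, hP, hmin⟩ := h.exists_sibling hm hB
  exact ⟨C, mem_eraseLeaf_of_notMem hC (h.2.1 C hC).1 hmC,
    eq_graftLeaf_eraseLeaf h hC hmC hP hmin⟩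

end eraseLeaf

lemma IsBinFrag.card_eq {B : Finset ℕ} {t : Finset (Finset ℕ)} (h : IsBinFrag B t) :
    #t = 2 * #B - 1 := by
  induction (h.2.1 B h.1).1 using Finset.Nonempty.cons_induction generalizing t with
  | singleton b => simp [isBinFrag_singleton_iff.1 h]
  | cons m B hm hB ih =>
    rw [cons_eq_insert] at h ⊢
    obtain ⟨A, hA, ht⟩ := h.exists_eq_graftLeaf hm hB
    have h' := isBinFrag_eraseLeaf h hm hB
    rw [ht, card_graftLeaf h' hm hA, ih h', card_insert_of_notMem hm]
    have := hB.card_pos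
    omega

lemma card_allBinFrags_insert {m : ℕ} {B : Finset ℕ} (hm : m ∉ B) (hB : B.Nonempty) :
    #(allBinFrags (insert m B)) = (2 * #B - 1) * #(allBinFrags B) := by
  have hgraft : #((allBinFrags B).sigma id) = #(allBinFrags (insert m B)) := by
    refine card_nbij (fun p => graftLeaf m p.1 p.2) ?_ ?_ ?_
    · rintro ⟨t, A⟩ htA
      obtain ⟨ht, hA⟩ : t ∈ allBinFrags B ∧ A ∈ t := mem_sigma.1 htA
      exact mem_allBinFrags.2 (isBinFrag_graftLeaf (mem_allBinFrags.1 ht) hm hA)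
    · rintro ⟨t, A⟩ htA ⟨t', A'⟩ htA' heq
      obtain ⟨ht, hA⟩ : t ∈ allBinFrags B ∧ A ∈ t := mem_sigma.1 htA
      obtain ⟨ht', hA'⟩ : t' ∈ allBinFrags B ∧ A' ∈ t' := mem_sigma.1 htA'
      obtain rfl : t = t' := by
        rw [← eraseLeaf_graftLeaf (mem_allBinFrags.1 ht) hm hA,
          ← eraseLeaf_graftLeaf (mem_allBinFrags.1 ht') hm hA']
        exact congrArg (eraseLeaf m) heq
      rw [graftLeaf_injOn (mem_allBinFrags.1 ht) hm hA hA' heq]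
    · intro t ht
      have h := mem_allBinFrags.1 ht
      obtain ⟨A, hA, htA⟩ := h.exists_eq_graftLeaf hm hB
      exact ⟨⟨eraseLeaf m t, A⟩,
        mem_sigma.2 ⟨mem_allBinFrags.2 (isBinFrag_eraseLeaf h hm hB), hA⟩, htA.symm⟩
  calc #(allBinFrags (insert m B))
      = ∑ t ∈ allBinFrags B, #t := by rw [← hgraft, card_sigma]; rfl
    _ = ∑ _t ∈ allBinFrags B, (2 * #B - 1) :=
        sum_congr rfl fun t ht => (mem_allBinFrags.1 ht).card_eq
    _ = (2 * #B - 1) * #(allBinFrags B) := by rw [sum_const, smul_eq_mul, mul_comm]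

lemma card_allBinFrags {B : Finset ℕ} (hB : B.Nonempty) :
    #(allBinFrags B) = (2 * #B - 3)‼ := by
  induction hB using Finset.Nonempty.cons_induction with
  | singleton b =>
    have : allBinFrags {b} = {{{b}}} := by
      ext t
      rw [mem_allBinFrags, isBinFrag_singleton_iff, mem_singleton]
    simp [this]
  | cons m B hm hB ih =>
    rw [cons_eq_insert, card_allBinFrags_insert hm hB, ih, card_insert_of_notMem hm]
    obtain ⟨k, hk⟩ := Nat.exists_eq_add_one_of_ne_zero hB.card_pos.ne'
    rw [hk, show 2 * (k + 1 + 1) - 3 = 2 * k + 1 by omega,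
      show 2 * (k + 1) - 3 = 2 * k - 1 by omega, show 2 * (k + 1) - 1 = 2 * k + 1 by omega,
      Nat.doubleFactorial_add_one]

lemma Nat.doubleFactorial_two_mul_sub_one_mul (k : ℕ) :
    (2 * k - 1)‼ * (2 ^ k * k !) = (2 * k)! := by
  rcases k with _ | k
  · rfl
  · rw [← Nat.doubleFactorial_two_mul, show 2 * (k + 1) = 2 * k + 1 + 1 by ring,
      Nat.factorial_eq_mul_doubleFactorial, mul_comm, Nat.add_sub_cancel]

/-- the number of binary fragmentation trees of `[n]` is
`(2n-2)!/(2^{n-1}(n-1)!) = (2n-3)!!`. -/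
theorem card_binFrags (n : ℕ) (hn : 1 ≤ n) :
    (allBinFrags (Finset.Icc 1 n)).card * (2 ^ (n - 1) * (n - 1).factorial) =
      (2 * n - 2).factorial ∧
    (allBinFrags (Finset.Icc 1 n)).card = Nat.doubleFactorial (2 * n - 3) := by
  have hcard : #(allBinFrags (Icc 1 n)) = (2 * n - 3)‼ := by
    rw [card_allBinFrags (nonempty_Icc.2 hn), Nat.card_Icc, Nat.add_sub_cancel]
  refine ⟨?_, hcard⟩
  obtain ⟨k, rfl⟩ := Nat.exists_eq_add_of_le' hn
  rw [hcard, show 2 * (k + 1) - 3 = 2 * k - 1 by omega, show 2 * (k + 1) - 2 = 2 * k by omega,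
    Nat.add_sub_cancel]
  exact Nat.doubleFactorial_two_mul_sub_one_mul k
end

section
/- For the uniform model on binary fragmentation trees of [n] (each tree has probability 2^{n-1}(n-1)!/(2n-2)!), the Markovian splitting rule is p(i,j) = w(i)w(j)/Z(i+j) with w(n) = (2n-2)!/(2^{2n-2}(n-1)!) and Z(n) = (2n-2)!/(2^{2n-3}(n-1)!); equivalently, the product formula P(T=t) = Π_{A∈t,#A≥2} p(#A₁,#A₂) yields the uniform distribution on B_[n]. -/
/-! Writing `f(n) = 2^{n-1}(n-1)!/(2n-2)!`, one has `Z = 2w` and `2^{n-1} w(n) f(n) = 1`, hence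
`p(i,j) f(i) f(j) = f(i+j)`. Multiplying this identity over the internal vertices of a tree, the
factors `f(#A)` of the non-root vertices cancel, leaving `f(n)` against the leaves' `f(1) = 1`. -/

open Finset

namespace IsBinFrag

variable {B C D A : Finset ℕ} {t : Finset (Finset ℕ)}

lemma root_mem (ht : IsBinFrag B t) : B ∈ t := ht.1

lemma nonempty_of_mem (ht : IsBinFrag B t) (hA : A ∈ t) : A.Nonempty := (ht.2.1 A hA).1

lemma subset_of_mem (ht : IsBinFrag B t) (hA : A ∈ t) : A ⊆ B := (ht.2.1 A hA).2

lemma card_eq_one_of_card_lt_two (ht : IsBinFrag B t) (hB : B.card < 2) : B.card = 1 := by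
  have := (ht.nonempty_of_mem ht.root_mem).card_pos
  omega

lemma filter_two_le_card_eq_empty (ht : IsBinFrag B t) (hB : B.card < 2) :
    t.filter (fun A => 2 ≤ A.card) = ∅ :=
  filter_eq_empty_iff.mpr fun A hA h => by
    have := card_le_card (ht.subset_of_mem hA)
    omega

lemma restrict (ht : IsBinFrag B t) (hC : C ∈ t) : IsBinFrag C (t.filter (· ⊆ C)) := by
  obtain ⟨-, hmem, hlam, hsing, hsplit⟩ := ht
  refine ⟨mem_filter.mpr ⟨hC, subset_rfl⟩, fun A hA => ?_, fun X hX Y hY => ?_, fun b hb => ?_,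
    fun A hA hA2 => ?_⟩
  · exact ⟨(hmem A (mem_filter.mp hA).1).1, (mem_filter.mp hA).2⟩
  · exact hlam X (mem_filter.mp hX).1 Y (mem_filter.mp hY).1
  · exact mem_filter.mpr ⟨hsing b ((hmem C hC).2 hb), singleton_subset_iff.mpr hb⟩
  · obtain ⟨hAt, hAC⟩ := mem_filter.mp hA
    obtain ⟨X, hX, Y, hY, hXY, rfl, hXne, hYne⟩ := hsplit _ hAt hA2
    exact ⟨X, mem_filter.mpr ⟨hX, subset_union_left.trans hAC⟩,
      Y, mem_filter.mpr ⟨hY, subset_union_right.trans hAC⟩, hXY, rfl, hXne, hYne⟩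

lemma subset_or_subset_of_ne_root (ht : IsBinFrag B t) (hA : A ∈ t) (hC : C ∈ t) (hD : D ∈ t)
    (hCD : C ∪ D = B) (hAB : A ≠ B) : A ⊆ C ∨ A ⊆ D := by
  have hACD : A ⊆ C ∪ D := hCD ▸ ht.subset_of_mem hA
  rcases ht.2.2.1 A hA C hC with hAC | hCA | hAC
  · exact Or.inl hAC
  · rcases ht.2.2.1 A hA D hD with hAD | hDA | hAD
    · exact Or.inr hAD
    · exact absurd (subset_antisymm (ht.subset_of_mem hA) (hCD ▸ union_subset hCA hDA)) hAB
    · exact Or.inl (hAD.left_le_of_le_sup_right hACD)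
  · exact Or.inr (hAC.left_le_of_le_sup_left hACD)

lemma filter_two_le_card_eq_insert (ht : IsBinFrag B t) (hC : C ∈ t) (hD : D ∈ t)
    (hCD : C ∪ D = B) (hB : 2 ≤ B.card) :
    t.filter (fun A => 2 ≤ A.card) = insert B
      ((t.filter (· ⊆ C)).filter (fun A => 2 ≤ A.card) ∪
        (t.filter (· ⊆ D)).filter (fun A => 2 ≤ A.card)) := by
  ext A
  simp only [mem_insert, mem_union, mem_filter]
  constructor
  · rintro ⟨hA, hA2⟩
    by_cases hAB : A = B
    · exact Or.inl hAB
    · rcases ht.subset_or_subset_of_ne_root hA hC hD hCD hAB with hAC | hAD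
      · exact Or.inr (Or.inl ⟨⟨hA, hAC⟩, hA2⟩)
      · exact Or.inr (Or.inr ⟨⟨hA, hAD⟩, hA2⟩)
  · rintro (rfl | ⟨⟨hA, -⟩, hA2⟩ | ⟨⟨hA, -⟩, hA2⟩)
    exacts [⟨ht.root_mem, hB⟩, ⟨hA, hA2⟩, ⟨hA, hA2⟩]

lemma not_subset_of_child (ht : IsBinFrag B t) (hD : D ∈ t) (hCD : C ∪ D = B)
    (hdisj : Disjoint C D) : ¬ B ⊆ C := fun hBC =>
  (ht.nonempty_of_mem hD).ne_empty <| (disjoint_self_iff_empty D).mp <|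
    hdisj.mono_left ((hCD ▸ subset_union_right : D ⊆ B).trans hBC)

lemma disjoint_filter_subset (ht : IsBinFrag B t) (hdisj : Disjoint C D) :
    Disjoint (t.filter (· ⊆ C)) (t.filter (· ⊆ D)) :=
  disjoint_left.mpr fun A hAC hAD =>
    (ht.nonempty_of_mem (mem_filter.mp hAC).1).ne_empty <| (disjoint_self_iff_empty A).mp <|
      hdisj.mono (mem_filter.mp hAC).2 (mem_filter.mp hAD).2

end IsBinFrag

lemma IsChildFun.restrict {t : Finset (Finset ℕ)} {ch : Finset ℕ → Finset ℕ × Finset ℕ}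
    (hch : IsChildFun t ch) (C : Finset ℕ) : IsChildFun (t.filter (· ⊆ C)) ch := by
  intro A hA hA2
  obtain ⟨hAt, hAC⟩ := mem_filter.mp hA
  obtain ⟨h₁, h₂, hdisj, hunion, hne₁, hne₂⟩ := hch A hAt hA2
  exact ⟨mem_filter.mpr ⟨h₁, (hunion ▸ subset_union_left).trans hAC⟩,
    mem_filter.mpr ⟨h₂, (hunion ▸ subset_union_right).trans hAC⟩, hdisj, hunion, hne₁, hne₂⟩

theorem IsBinFrag.prod_filter_two_le_card_eq {M : Type*} [CommMonoid M] {f : ℕ → M}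
    {p : ℕ → ℕ → M} (hf : f 1 = 1)
    (hpf : ∀ i j : ℕ, 1 ≤ i → 1 ≤ j → p i j * f i * f j = f (i + j))
    {B : Finset ℕ} {t : Finset (Finset ℕ)} (ht : IsBinFrag B t)
    {ch : Finset ℕ → Finset ℕ × Finset ℕ} (hch : IsChildFun t ch) :
    ∏ A ∈ t.filter (fun A => 2 ≤ A.card), p (ch A).1.card (ch A).2.card = f B.card := by
  induction B using Finset.strongInduction generalizing t with
  | H B ih =>
  rcases Nat.lt_or_ge B.card 2 with hB | hB
  · rw [ht.filter_two_le_card_eq_empty hB, prod_empty, ht.card_eq_one_of_card_lt_two hB, hf]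
  obtain ⟨hC, hD, hdisj, hCD, hCne, hDne⟩ := hch B ht.root_mem hB
  set C := (ch B).1
  set D := (ch B).2
  have hCB : C ⊂ B := ssubset_of_subset_of_ne (hCD ▸ subset_union_left)
    fun h => ht.not_subset_of_child hD hCD hdisj h.ge
  have hDB : D ⊂ B := ssubset_of_subset_of_ne (hCD ▸ subset_union_right)
    fun h => ht.not_subset_of_child hC (union_comm C D ▸ hCD) hdisj.symm h.ge
  have hcard : B.card = C.card + D.card := by rw [← hCD, card_union_of_disjoint hdisj]
  have hB_notMem : B ∉ (t.filter (· ⊆ C)).filter (fun A => 2 ≤ A.card) ∪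
      (t.filter (· ⊆ D)).filter (fun A => 2 ≤ A.card) := by
    simp only [mem_union, mem_filter, not_or]
    exact ⟨fun h => hCB.2 h.1.2, fun h => hDB.2 h.1.2⟩
  rw [ht.filter_two_le_card_eq_insert hC hD hCD hB, prod_insert hB_notMem,
    prod_union ((ht.disjoint_filter_subset hdisj).mono (filter_subset _ _) (filter_subset _ _)),
    ih C hCB (ht.restrict hC) (hch.restrict C), ih D hDB (ht.restrict hD) (hch.restrict D),
    hcard, ← hpf _ _ hCne.card_pos hDne.card_pos, mul_assoc]

noncomputable def uniformWeight (n : ℕ) : ℝ :=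
  ((2 * n - 2).factorial : ℝ) / (2 ^ (2 * n - 2) * ((n - 1).factorial : ℝ))

noncomputable def uniformProb (n : ℕ) : ℝ :=
  (2 ^ (n - 1) * ((n - 1).factorial : ℝ)) / ((2 * n - 2).factorial : ℝ)

lemma uniformProb_one : uniformProb 1 = 1 := by
  simp [uniformProb]

lemma uniformWeight_pos (n : ℕ) : 0 < uniformWeight n := by
  unfold uniformWeight
  positivity

lemma uniformProb_eq_inv {n : ℕ} (hn : 1 ≤ n) :
    uniformProb n = (2 ^ (n - 1) * uniformWeight n)⁻¹ := by
  obtain ⟨m, rfl⟩ := Nat.exists_eq_add_of_le' hn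
  simp only [uniformWeight, uniformProb, Nat.add_sub_cancel, show 2 * (m + 1) - 2 = 2 * m by omega]
  field_simp
  ring

lemma factorial_div_eq_two_mul_uniformWeight {n : ℕ} (hn : 2 ≤ n) :
    ((2 * n - 2).factorial : ℝ) / (2 ^ (2 * n - 3) * ((n - 1).factorial : ℝ)) =
      2 * uniformWeight n := by
  obtain ⟨m, rfl⟩ := Nat.exists_eq_add_of_le' hn
  simp only [uniformWeight, show 2 * (m + 2) - 2 = 2 * m + 2 by omega,
    show 2 * (m + 2) - 3 = 2 * m + 1 by omega]
  field_simp
  ring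

lemma uniformWeight_splitting_mul_uniformProb {i j : ℕ} (hi : 1 ≤ i) (hj : 1 ≤ j) :
    uniformWeight i * uniformWeight j / (2 * uniformWeight (i + j)) * uniformProb i *
      uniformProb j = uniformProb (i + j) := by
  rw [uniformProb_eq_inv hi, uniformProb_eq_inv hj, uniformProb_eq_inv (by omega)]
  have := uniformWeight_pos i
  have := uniformWeight_pos j
  have := uniformWeight_pos (i + j)
  obtain ⟨a, rfl⟩ := Nat.exists_eq_add_of_le' hi
  obtain ⟨b, rfl⟩ := Nat.exists_eq_add_of_le' hj
  rw [show a + 1 + (b + 1) - 1 = a + b + 1 by omega, Nat.add_sub_cancel, Nat.add_sub_cancel]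
  field_simp
  ring

/-- for the β = -3/2 Gibbs weights `w n = (2n-2)!/(2^{2n-2}(n-1)!)`,
`Z n = (2n-2)!/(2^{2n-3}(n-1)!)`, the Markovian product formula
`∏_{A ∈ t, #A ≥ 2} p(#A₁, #A₂)` yields the uniform distribution
`2^{n-1}(n-1)!/(2n-2)!` on binary fragmentation trees of `[n]`. -/
theorem uniform_model_splitting_rule
    (w Z : ℕ → ℝ)
    (hw : ∀ n : ℕ, 1 ≤ n →
      w n = ((2 * n - 2).factorial : ℝ) / (2 ^ (2 * n - 2) * ((n - 1).factorial : ℝ)))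
    (hZ : ∀ n : ℕ, 2 ≤ n →
      Z n = ((2 * n - 2).factorial : ℝ) / (2 ^ (2 * n - 3) * ((n - 1).factorial : ℝ)))
    (p : ℕ → ℕ → ℝ)
    (hp : ∀ i j : ℕ, 1 ≤ i → 1 ≤ j → p i j = w i * w j / Z (i + j)) :
    ∀ n : ℕ, 1 ≤ n → ∀ t ∈ allBinFrags (Finset.Icc 1 n),
      ∀ ch : Finset ℕ → Finset ℕ × Finset ℕ, IsChildFun t ch →
        ∏ A ∈ t.filter (fun A => 2 ≤ A.card), p (ch A).1.card (ch A).2.card =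
          (2 ^ (n - 1) * ((n - 1).factorial : ℝ)) / ((2 * n - 2).factorial : ℝ) := by
  classical
  intro n hn t ht ch hch
  have hsplit : ∀ i j : ℕ, 1 ≤ i → 1 ≤ j →
      p i j * uniformProb i * uniformProb j = uniformProb (i + j) := by
    intro i j hi hj
    rw [hp i j hi hj, hw i hi, hw j hj, hZ (i + j) (by omega),
      factorial_div_eq_two_mul_uniformWeight (by omega)]
    exact uniformWeight_splitting_mul_uniformProb hi hj
  have := (mem_filter.mp ht).2.prod_filter_two_le_card_eq uniformProb_one hsplit hch
  rwa [Nat.card_Icc, Nat.add_sub_cancel] at this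
end
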